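/- For any real-valued random variable X, any d ∈ ℝ, and any positive integer D satisfying 2D|d| ≤ 1, one has H(X,d) ≥ 4 D² d² · H_D(X). -/
import Mathlib

open MeasureTheory

/-- Distance from a real number to the nearest integer. -/
noncomputable def distNearestInt (α : ℝ) : ℝ := |α - round α|

/-- `H(X,d) = E⟨X* d⟩²` where `X* = X - X'` is the symmetrisation of `X`; expressed via
the law `ν` of `X` as a double integral. -/
noncomputable def Hsym (ν : Measure ℝ) (d : ℝ) : ℝ :=
  ∫ x, ∫ y, distNearestInt ((x - y) * d) ^ 2 ∂ν ∂ν

/-- `H_D(X) = inf_{1/(4D) ≤ d ≤ 1/(2D)} H(X,d)`. -/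
noncomputable def HsymD (ν : Measure ℝ) (D : ℕ) : ℝ :=
  sInf (Hsym ν '' Set.Icc (1 / (4 * (D : ℝ))) (1 / (2 * (D : ℝ))))

lemma distNearestInt_nonneg (α : ℝ) : 0 ≤ distNearestInt α := abs_nonneg _

lemma distNearestInt_le (α : ℝ) (m : ℤ) : distNearestInt α ≤ |α - m| := by
  rcases eq_or_ne m (round α) with rfl | h
  · simp [distNearestInt]
  · have h1 : |α - round α| ≤ 1 / 2 := abs_sub_round α
    have h2 : (1 : ℝ) ≤ |(round α : ℝ) - m| := by
      have : round α - m ≠ 0 := sub_ne_zero.mpr (Ne.symm h)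
      have := Int.one_le_abs this
      calc (1:ℝ) ≤ |(round α - m : ℤ)| := by exact_mod_cast this
        _ = |(round α : ℝ) - m| := by push_cast; ring_nf
    have h3 : |(round α : ℝ) - m| ≤ |(round α : ℝ) - α| + |α - m| := abs_sub_le _ _ _
    have h4 : |(round α : ℝ) - α| = |α - round α| := abs_sub_comm _ _
    simp only [distNearestInt]
    linarith

lemma distNearestInt_le_half (α : ℝ) : distNearestInt α ≤ 1 / 2 := abs_sub_round α

lemma distNearestInt_neg (α : ℝ) : distNearestInt (-α) = distNearestInt α := by
  have h : ∀ β : ℝ, distNearestInt (-β) ≤ distNearestInt β := by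
    intro β
    have h1 := distNearestInt_le (-β) (-round β)
    have h2 : |(-β : ℝ) - ((-round β : ℤ) : ℝ)| = distNearestInt β := by
      push_cast
      rw [show (-β : ℝ) - -(round β : ℝ) = -(β - round β) by ring, abs_neg]
      rfl
    rw [h2] at h1
    exact h1
  refine le_antisymm (h α) ?_
  simpa using h (-α)

lemma distNearestInt_nsmul (n : ℕ) (α : ℝ) :
    distNearestInt ((n : ℝ) * α) ≤ (n : ℝ) * distNearestInt α := by
  have := distNearestInt_le ((n : ℝ) * α) ((n : ℤ) * round α)
  calc distNearestInt ((n : ℝ) * α) ≤ |(n : ℝ) * α - ((n : ℤ) * round α : ℤ)| := this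
    _ = (n : ℝ) * |α - round α| := by
        push_cast
        rw [← mul_sub, abs_mul, abs_of_nonneg (by positivity : (0:ℝ) ≤ (n:ℝ))]
    _ = (n : ℝ) * distNearestInt α := rfl

lemma measurable_distNearestInt : Measurable distNearestInt := by
  have hr : Measurable fun x : ℝ => ((round x : ℤ) : ℝ) := by
    have : Measurable fun x : ℝ => round x := by
      simp only [round_eq]
      exact Int.measurable_floor.comp (measurable_id.add_const _)
    exact Measurable.of_discrete.comp this
  exact (measurable_id.sub hr).abs

lemma integrable_dNI (ν : Measure ℝ) [IsProbabilityMeasure ν] (c : ℝ) (x : ℝ) :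
    Integrable (fun y => distNearestInt ((x - y) * c) ^ 2) ν := by
  refine (integrable_const (1/4 : ℝ)).mono' ?_ ?_
  · exact ((measurable_distNearestInt.comp
      (((measurable_const.sub measurable_id).mul_const c))).pow_const 2).aestronglyMeasurable
  · refine Filter.Eventually.of_forall fun y => ?_
    have h0 := distNearestInt_nonneg ((x - y) * c)
    have h1 := distNearestInt_le_half ((x - y) * c)
    rw [Real.norm_eq_abs, abs_of_nonneg (by positivity)]
    nlinarith

lemma integrable_dNI_outer (ν : Measure ℝ) [IsProbabilityMeasure ν] (c : ℝ) :
    Integrable (fun x => ∫ y, distNearestInt ((x - y) * c) ^ 2 ∂ν) ν := by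
  have hm : StronglyMeasurable fun p : ℝ × ℝ => distNearestInt ((p.1 - p.2) * c) ^ 2 :=
    ((measurable_distNearestInt.comp
      ((measurable_fst.sub measurable_snd).mul_const c)).pow_const 2).stronglyMeasurable
  refine (integrable_const (1/4 : ℝ)).mono' ?_ ?_
  · exact hm.integral_prod_right'.aestronglyMeasurable
  · refine Filter.Eventually.of_forall fun x => ?_
    have : ‖∫ y, distNearestInt ((x - y) * c) ^ 2 ∂ν‖ ≤ 1/4 * (ν Set.univ).toReal := by
      refine norm_integral_le_of_norm_le_const ?_
      refine Filter.Eventually.of_forall fun y => ?_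
      have h0 := distNearestInt_nonneg ((x - y) * c)
      have h1 := distNearestInt_le_half ((x - y) * c)
      rw [Real.norm_eq_abs, abs_of_nonneg (by positivity)]
      nlinarith
    simpa using this

lemma Hsym_nonneg (ν : Measure ℝ) (c : ℝ) : 0 ≤ Hsym ν c :=
  integral_nonneg fun _ => integral_nonneg fun _ => by positivity

lemma Hsym_le (ν : Measure ℝ) [IsProbabilityMeasure ν] (d : ℝ) (n : ℕ) :
    Hsym ν ((n : ℝ) * |d|) ≤ (n : ℝ) ^ 2 * Hsym ν d := by
  have key : ∀ z : ℝ, distNearestInt (z * ((n : ℝ) * |d|)) ^ 2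
      ≤ (n : ℝ) ^ 2 * distNearestInt (z * d) ^ 2 := by
    intro z
    have h1 : distNearestInt (z * ((n : ℝ) * |d|)) ≤ (n : ℝ) * distNearestInt (z * |d|) := by
      have := distNearestInt_nsmul n (z * |d|)
      calc distNearestInt (z * ((n : ℝ) * |d|)) = distNearestInt ((n : ℝ) * (z * |d|)) := by
            ring_nf
        _ ≤ (n : ℝ) * distNearestInt (z * |d|) := this
    have h2 : distNearestInt (z * |d|) = distNearestInt (z * d) := by
      rcases abs_choice d with h | h
      · rw [h]
      · rw [h, mul_neg, distNearestInt_neg]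
    rw [h2] at h1
    have h0 := distNearestInt_nonneg (z * ((n : ℝ) * |d|))
    have h3 := distNearestInt_nonneg (z * d)
    nlinarith
  have inner : ∀ x : ℝ, (∫ y, distNearestInt ((x - y) * ((n : ℝ) * |d|)) ^ 2 ∂ν)
      ≤ ∫ y, (n : ℝ) ^ 2 * distNearestInt ((x - y) * d) ^ 2 ∂ν := fun x =>
    integral_mono (integrable_dNI ν _ x) ((integrable_dNI ν d x).const_mul _)
      (fun y => key (x - y))
  calc Hsym ν ((n : ℝ) * |d|)
      ≤ ∫ x, (n : ℝ) ^ 2 * ∫ y, distNearestInt ((x - y) * d) ^ 2 ∂ν ∂ν := by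
        refine integral_mono (integrable_dNI_outer ν _) ((integrable_dNI_outer ν d).const_mul _)
          fun x => ?_
        rw [← integral_const_mul]
        exact inner x
    _ = (n : ℝ) ^ 2 * Hsym ν d := integral_const_mul _ _

/-- Mukhin's lemma: for any random variable `X`, `d ∈ ℝ` and positive integer `D`
with `2D|d| ≤ 1`, one has `H(X,d) ≥ 4D²d² H_D(X)`. -/
theorem Hsym_ge_of_le
    {Ω : Type*} [MeasurableSpace Ω] {μ : Measure Ω} [IsProbabilityMeasure μ]
    (X : Ω → ℝ) (hX : Measurable X)
    (d : ℝ) (D : ℕ) (hD : 0 < D) (hdD : 2 * (D : ℝ) * |d| ≤ 1) :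
    4 * (D : ℝ) ^ 2 * d ^ 2 * HsymD (μ.map X) D ≤ Hsym (μ.map X) d := by
  set ν := μ.map X with hν
  haveI : IsProbabilityMeasure ν := Measure.isProbabilityMeasure_map hX.aemeasurable
  rcases eq_or_ne d 0 with rfl | hd0
  · have : Hsym ν 0 = 0 := by
      simp [Hsym, distNearestInt]
    simp [this]
  · have hDpos : (0 : ℝ) < D := by exact_mod_cast hD
    have habs : 0 < |d| := abs_pos.mpr hd0
    set u : ℝ := 1 / (2 * (D : ℝ) * |d|) with hu
    have hupos : 0 < 2 * (D : ℝ) * |d| := by positivity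
    have hu1 : 1 ≤ u := by
      rw [hu, le_div_iff₀ hupos]; linarith
    set n : ℕ := ⌊u⌋₊ with hn
    have hn1 : 1 ≤ n := Nat.le_floor (by exact_mod_cast hu1)
    have hnle : (n : ℝ) ≤ u := Nat.floor_le (by linarith)
    have hngt : u - 1 < (n : ℝ) := by
      have := Nat.sub_one_lt_floor u
      exact_mod_cast this
    have hnhalf : u / 2 ≤ (n : ℝ) := by
      rcases le_or_gt 2 u with h | h
      · linarith
      · have : (1 : ℝ) ≤ (n : ℝ) := by exact_mod_cast hn1
        linarith
    set e : ℝ := (n : ℝ) * |d| with he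
    have he_mem : e ∈ Set.Icc (1 / (4 * (D : ℝ))) (1 / (2 * (D : ℝ))) := by
      constructor
      · have : u / 2 * |d| ≤ e := by
          rw [he]; exact mul_le_mul_of_nonneg_right hnhalf (le_of_lt habs)
        calc 1 / (4 * (D : ℝ)) = u / 2 * |d| := by
              rw [hu]; field_simp; ring
          _ ≤ e := this
      · have : e ≤ u * |d| := mul_le_mul_of_nonneg_right hnle (le_of_lt habs)
        calc e ≤ u * |d| := this
          _ = 1 / (2 * (D : ℝ)) := by rw [hu]; field_simp
    have hbdd : BddBelow (Hsym ν '' Set.Icc (1 / (4 * (D : ℝ))) (1 / (2 * (D : ℝ)))) := by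
      refine ⟨0, fun x hx => ?_⟩
      obtain ⟨c, _, rfl⟩ := hx
      exact Hsym_nonneg ν c
    have hInf : HsymD ν D ≤ Hsym ν e := csInf_le hbdd ⟨e, he_mem, rfl⟩
    have hHe : Hsym ν e ≤ (n : ℝ) ^ 2 * Hsym ν d := Hsym_le ν d n
    have hnpos : (0 : ℝ) < (n : ℝ) := by exact_mod_cast hn1
    have hcoef : 4 * (D : ℝ) ^ 2 * d ^ 2 * (n : ℝ) ^ 2 ≤ 1 := by
      have hed : e ≤ 1 / (2 * (D : ℝ)) := he_mem.2
      have : (n : ℝ) * |d| * (2 * (D : ℝ)) ≤ 1 := by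
        rw [he] at hed
        calc (n : ℝ) * |d| * (2 * (D : ℝ)) ≤ 1 / (2 * (D : ℝ)) * (2 * (D : ℝ)) :=
              mul_le_mul_of_nonneg_right hed (by positivity)
          _ = 1 := by field_simp
      have hd2 : d ^ 2 = |d| ^ 2 := (sq_abs d).symm
      have hx0 : (0 : ℝ) ≤ (n : ℝ) * |d| * (2 * (D : ℝ)) := by positivity
      have hx2 : ((n : ℝ) * |d| * (2 * (D : ℝ))) * ((n : ℝ) * |d| * (2 * (D : ℝ))) ≤ 1 := by
        nlinarith
      calc 4 * (D : ℝ) ^ 2 * d ^ 2 * (n : ℝ) ^ 2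
          = ((n : ℝ) * |d| * (2 * (D : ℝ))) * ((n : ℝ) * |d| * (2 * (D : ℝ))) := by
            rw [hd2]; ring
        _ ≤ 1 := hx2
    have hHd : (0 : ℝ) ≤ Hsym ν e := Hsym_nonneg ν e
    calc 4 * (D : ℝ) ^ 2 * d ^ 2 * HsymD ν D
        ≤ 4 * (D : ℝ) ^ 2 * d ^ 2 * Hsym ν e :=
          mul_le_mul_of_nonneg_left hInf (by positivity)
      _ ≤ 1 / (n : ℝ) ^ 2 * Hsym ν e := by
          refine mul_le_mul_of_nonneg_right ?_ hHd
          rw [le_div_iff₀ (by positivity : (0:ℝ) < (n : ℝ) ^ 2)]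
          linarith [hcoef]
      _ ≤ Hsym ν d := by
          rw [div_mul_eq_mul_div, one_mul, div_le_iff₀ (by positivity)]
          calc Hsym ν e ≤ (n : ℝ) ^ 2 * Hsym ν d := hHe
            _ = Hsym ν d * (n : ℝ) ^ 2 := by ring
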